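/- Let V be a real vector space, ω an alternating bilinear form on V, κ a symmetric bilinear form on V, and D : V → V a linear map satisfying κ(Dx,y) = ω(y,x) for all x,y ∈ V. Define two brackets on ℝ × V × ℝ: [(z,v,t),(z′,v′,t′)]_κ := (κ(Dv,v′), t·Dv′ − t′·Dv, 0) and [(z,v,t),(z′,v′,t′)]_ω := (ω(v,v′), t·Dv′ − t′·Dv, 0). Then the linear bijection φ : ℝ × V × ℝ → ℝ × V × ℝ, φ(z,x,t) := (−z,x,t), intertwines the brackets: φ([a,b]_κ) = [φ(a), φ(b)]_ω for all a,b; i.e. φ is an isomorphism from the double extension g(V,κ,D) onto the generalized oscillator algebra g(V,ω,D). -/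

import Mathlib

/-- The bracket of the double extension `g(V,κ,D) = ℝ × V × ℝ`. -/
def doubleExtBracket' {V : Type*} [AddCommGroup V] [Module ℝ V]
    (κ : V →ₗ[ℝ] V →ₗ[ℝ] ℝ) (D : V →ₗ[ℝ] V)
    (p q : ℝ × V × ℝ) : ℝ × V × ℝ :=
  (κ (D p.2.1) q.2.1, p.2.2 • D q.2.1 - q.2.2 • D p.2.1, 0)

/-- The bracket of the generalized oscillator algebra `g(V,ω,D) = ℝ × V × ℝ`. -/
def oscBracket' {V : Type*} [AddCommGroup V] [Module ℝ V]
    (ω : V →ₗ[ℝ] V →ₗ[ℝ] ℝ) (D : V →ₗ[ℝ] V)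
    (p q : ℝ × V × ℝ) : ℝ × V × ℝ :=
  (ω p.2.1 q.2.1, p.2.2 • D q.2.1 - q.2.2 • D p.2.1, 0)

theorem doubleExt_iso_oscillator_general
    {V : Type*} [AddCommGroup V] [Module ℝ V]
    (ω : V →ₗ[ℝ] V →ₗ[ℝ] ℝ) (halt : ∀ v : V, ω v v = 0)
    (κ : V →ₗ[ℝ] V →ₗ[ℝ] ℝ)
    (D : V →ₗ[ℝ] V) (hrel : ∀ x y : V, κ (D x) y = ω y x) :
    ∀ a b : ℝ × V × ℝ,
      (fun p : ℝ × V × ℝ => (-p.1, p.2.1, p.2.2)) (doubleExtBracket' κ D a b)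
        = oscBracket' ω D ((fun p : ℝ × V × ℝ => (-p.1, p.2.1, p.2.2)) a)
            ((fun p : ℝ × V × ℝ => (-p.1, p.2.1, p.2.2)) b) := by
  intro a b
  simp only [doubleExtBracket', oscBracket', hrel, LinearMap.IsAlt.neg halt]

/-- If `κ(Dx,y) = ω(y,x)` for all `x, y`, then the linear bijection
`φ(z,x,t) = (-z,x,t)` intertwines the double extension bracket of `g(V,κ,D)` with the
oscillator bracket of `g(V,ω,D)`: `φ([a,b]_κ) = [φ(a), φ(b)]_ω`. -/
theorem doubleExt_iso_oscillator
    {V : Type*} [AddCommGroup V] [Module ℝ V]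
    (ω : V →ₗ[ℝ] V →ₗ[ℝ] ℝ) (halt : ∀ v : V, ω v v = 0)
    (κ : V →ₗ[ℝ] V →ₗ[ℝ] ℝ) (hκsymm : ∀ x y : V, κ x y = κ y x)
    (D : V →ₗ[ℝ] V) (hrel : ∀ x y : V, κ (D x) y = ω y x) :
    ∀ a b : ℝ × V × ℝ,
      (fun p : ℝ × V × ℝ => (-p.1, p.2.1, p.2.2)) (doubleExtBracket' κ D a b)
        = oscBracket' ω D ((fun p : ℝ × V × ℝ => (-p.1, p.2.1, p.2.2)) a)
            ((fun p : ℝ × V × ℝ => (-p.1, p.2.1, p.2.2)) b) :=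
  doubleExt_iso_oscillator_general ω halt κ D hrel
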